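/- For every graph H of bounded maximum degree and every integer k, the graph G obtained from H by attaching k new pendant vertices (of degree 1) to each vertex of H satisfies: H^k ⊠ K_k is isomorphic to a subgraph of G^{k+2}. -/

import Mathlib

open SimpleGraph

/-- `H` is a minor of `G`, via branch sets. -/
def IsMinor {W V : Type*} (H : SimpleGraph W) (G : SimpleGraph V) : Prop :=
  ∃ B : W → Set V,
    (∀ w, (B w).Nonempty) ∧
    (∀ w, (G.induce (B w)).Connected) ∧
    (∀ w w', w ≠ w' → Disjoint (B w) (B w')) ∧
    (∀ ⦃w w'⦄, H.Adj w w' → ∃ u ∈ B w, ∃ v ∈ B w', G.Adj u v)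

/-- Planarity, via Wagner's characterization. -/
def IsPlanar {V : Type*} (G : SimpleGraph V) : Prop :=
  ¬ IsMinor (completeGraph (Fin 5)) G ∧
  ¬ IsMinor (completeBipartiteGraph (Fin 3) (Fin 3)) G

/-- `G` is isomorphic to a subgraph of `H`. -/
def EmbedsIn {V W : Type*} (G : SimpleGraph V) (H : SimpleGraph W) : Prop :=
  ∃ f : V → W, Function.Injective f ∧ ∀ ⦃u v⦄, G.Adj u v → H.Adj (f u) (f v)

/-- every vertex has at most `Δ` neighbours. -/
def MaxDegLE {V : Type*} (G : SimpleGraph V) (Δ : ℕ) : Prop :=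
  ∀ v, (G.neighborSet v).Finite ∧ (G.neighborSet v).ncard ≤ Δ

/-- the `k`-th power of a graph. -/
def pow {V : Type*} (G : SimpleGraph V) (k : ℕ) : SimpleGraph V where
  Adj u v := u ≠ v ∧ G.Reachable u v ∧ G.dist u v ≤ k
  symm := by
    constructor
    intro u v ⟨h1, h2, h3⟩
    exact ⟨h1.symm, h2.symm, by rwa [SimpleGraph.dist_comm]⟩
  loopless := by constructor; intro u h; exact h.1 rfl

/-- the `k`-blow-up of a graph. -/
def blowup {V : Type*} (G : SimpleGraph V) (k : ℕ) : SimpleGraph (V × Fin k) where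
  Adj a b := (a.1 = b.1 ∧ a.2 ≠ b.2) ∨ G.Adj a.1 b.1
  symm := by
    constructor
    rintro a b (⟨h1, h2⟩ | h)
    · exact Or.inl ⟨h1.symm, h2.symm⟩
    · exact Or.inr h.symm
  loopless := by
    constructor
    rintro a (⟨_, h2⟩ | h)
    · exact h2 rfl
    · exact G.ne_of_adj h rfl

/-- `ℓ`-planarity, combinatorially: there is a planar graph `P` (the planarization)
in which the vertices of `G` embed injectively and every edge of `G` is represented by a path
of length at most `ℓ+1` (i.e. subdivided at most `ℓ` times, once per crossing);
internal vertices of these paths are crossing vertices: they are not images of vertices of `G`,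
each lies on at most two of the paths, and every edge of `P` is used by at most one path. -/
def IsLPlanar {V : Type} (G : SimpleGraph V) (ℓ : ℕ) : Prop :=
  ∃ (W : Type) (P : SimpleGraph W) (f : V → W)
    (wk : G.edgeSet → Σ' (u v : V), P.Walk (f u) (f v)),
    IsPlanar P ∧ Function.Injective f ∧
    (∀ e : G.edgeSet, s((wk e).1, (wk e).2.1) = (e : Sym2 V)) ∧
    (∀ e : G.edgeSet, (wk e).2.2.IsPath ∧ (wk e).2.2.length ≤ ℓ + 1) ∧
    (∀ (e : G.edgeSet) (w : W), w ∈ (wk e).2.2.support → w ∈ Set.range f →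
        w = f (wk e).1 ∨ w = f (wk e).2.1) ∧
    (∀ (ep : Sym2 W) (e₁ e₂ : G.edgeSet),
        ep ∈ (wk e₁).2.2.edges → ep ∈ (wk e₂).2.2.edges → e₁ = e₂) ∧
    (∀ w : W, w ∉ Set.range f →
        ∃ a b : G.edgeSet, ∀ e : G.edgeSet, w ∈ (wk e).2.2.support → e = a ∨ e = b)

/-- quasi-isometric embedding conditions with constants `lam`, `eps` between graphs. -/
def GraphQIEmb {V W : Type*} (G : SimpleGraph V) (H : SimpleGraph W) (f : V → W)
    (lam eps : ℝ) : Prop :=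
  1 ≤ lam ∧ 0 ≤ eps ∧
  ∀ x y : V, (1 / lam) * (G.dist x y : ℝ) - eps ≤ (H.dist (f x) (f y) : ℝ) ∧
    (H.dist (f x) (f y) : ℝ) ≤ lam * (G.dist x y : ℝ) + eps

/-- quasi-isometry between graphs (shortest-path metrics): additionally the image is coarsely dense. -/
def GraphQI {V W : Type*} (G : SimpleGraph V) (H : SimpleGraph W) (f : V → W)
    (lam eps C : ℝ) : Prop :=
  GraphQIEmb G H f lam eps ∧ 0 ≤ C ∧ ∀ w : W, ∃ x : V, (H.dist w (f x) : ℝ) ≤ C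

def GraphQuasiIsometric {V W : Type*} (G : SimpleGraph V) (H : SimpleGraph W) : Prop :=
  ∃ (f : V → W) (lam eps C : ℝ), GraphQI G H f lam eps C

/-- tree-decomposition of `G` over the tree `Tr`. -/
structure TreeDecomp {V T : Type*} (G : SimpleGraph V) (Tr : SimpleGraph T) where
  bag : T → Set V
  covers : ∀ v : V, ∃ t, v ∈ bag t
  covers_edge : ∀ ⦃u v⦄, G.Adj u v → ∃ t, u ∈ bag t ∧ v ∈ bag t
  subtree : ∀ v : V, (Tr.induce {t | v ∈ bag t}).Connected

/-- the torso of a bag of a tree-decomposition. -/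
def torso {V T : Type*} {G : SimpleGraph V} {Tr : SimpleGraph T}
    (D : TreeDecomp G Tr) (t : T) : SimpleGraph (D.bag t) :=
  SimpleGraph.fromRel (fun u v =>
    G.Adj u.1 v.1 ∨ ∃ t', Tr.Adj t t' ∧ (u : V) ∈ D.bag t' ∧ (v : V) ∈ D.bag t')

/-- `G` has treewidth at most `w`. -/
def HasTWLE {V : Type*} (G : SimpleGraph V) (w : ℕ) : Prop :=
  ∃ (T : Type) (Tr : SimpleGraph T), Tr.IsTree ∧
    ∃ D : TreeDecomp G Tr, ∀ t, (D.bag t).Finite ∧ (D.bag t).ncard ≤ w + 1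

/-- separations -/
def IsSeparation {V : Type*} (G : SimpleGraph V) (Y S Z : Set V) : Prop :=
  Disjoint Y S ∧ Disjoint Y Z ∧ Disjoint S Z ∧ Y ∪ S ∪ Z = Set.univ ∧
  ∀ ⦃u v⦄, u ∈ Y → v ∈ Z → ¬ G.Adj u v

def IsTightSeparation {V : Type*} (G : SimpleGraph V) (Y S Z : Set V) : Prop :=
  ∃ Cy Cz : Set V, Cy.Nonempty ∧ Cz.Nonempty ∧ Cy ⊆ Y ∧ Cz ⊆ Z ∧
    (G.induce Cy).Connected ∧ (G.induce Cz).Connected ∧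
    {v | v ∉ Cy ∧ ∃ u ∈ Cy, G.Adj u v} = S ∧
    {v | v ∉ Cz ∧ ∃ u ∈ Cz, G.Adj u v} = S

/-- a layering of a graph. -/
def IsLayering {V : Type*} (G : SimpleGraph V) (L : ℕ → Set V) : Prop :=
  (∀ v, ∃! i, v ∈ L i) ∧
  ∀ ⦃u v⦄, G.Adj u v → ∀ i j, u ∈ L i → v ∈ L j → i ≤ j + 1 ∧ j ≤ i + 1

/-- an `n`-dimensional control function with dilation constant `c` for the graph metric of `G`
(the distance between vertices in different components being interpreted as infinite). -/
def GraphControl {V : Type*} (G : SimpleGraph V) (n : ℕ) (c : ℝ) : Prop :=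
  ∀ r : ℝ, 0 < r → ∃ U : Fin (n + 1) → Set (Set V),
    (∀ x : V, ∃ i, ∃ u ∈ U i, x ∈ u) ∧
    (∀ i, ∀ u ∈ U i, ∀ w ∈ U i, u ≠ w → ∀ x ∈ u, ∀ y ∈ w,
        ¬ G.Reachable x y ∨ r < (G.dist x y : ℝ)) ∧
    (∀ i, ∀ u ∈ U i, ∀ x ∈ u, ∀ y ∈ u, G.Reachable x y ∧ (G.dist x y : ℝ) ≤ c * r)

/-- the Assouad-Nagata dimension of the graph `G` is at most `n`. -/
def GraphANDimLE {V : Type*} (G : SimpleGraph V) (n : ℕ) : Prop :=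
  ∃ c : ℝ, 0 < c ∧ GraphControl G n c

/-- an `n`-dimensional control function with dilation constant `c` for a metric space. -/
def ANControl (X : Type*) [PseudoMetricSpace X] (n : ℕ) (c : ℝ) : Prop :=
  ∀ r : ℝ, 0 < r → ∃ U : Fin (n + 1) → Set (Set X),
    (∀ x : X, ∃ i, ∃ u ∈ U i, x ∈ u) ∧
    (∀ i, ∀ u ∈ U i, ∀ w ∈ U i, u ≠ w → ∀ x ∈ u, ∀ y ∈ w, r < dist x y) ∧
    (∀ i, ∀ u ∈ U i, ∀ x ∈ u, ∀ y ∈ u, dist x y ≤ c * r)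

/-- the Assouad-Nagata dimension of a metric space is at most `n`. -/
def ANDimLE (X : Type*) [PseudoMetricSpace X] (n : ℕ) : Prop :=
  ∃ c : ℝ, 0 < c ∧ ANControl X n c

/-- quasi-isometry conditions for metric spaces. -/
def MetricQI (X Y : Type*) [PseudoMetricSpace X] [PseudoMetricSpace Y]
    (f : X → Y) (lam eps C : ℝ) : Prop :=
  1 ≤ lam ∧ 0 ≤ eps ∧ 0 ≤ C ∧
  (∀ y : Y, ∃ x : X, dist y (f x) ≤ C) ∧
  ∀ x₁ x₂ : X, (1 / lam) * dist x₁ x₂ - eps ≤ dist (f x₁) (f x₂) ∧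
    dist (f x₁) (f x₂) ≤ lam * dist x₁ x₂ + eps

/-- attaching a set `P` of pendant vertices to `H`, the pendant `p` being attached at `g p`. -/
def attachPendants {V : Type*} (H : SimpleGraph V) (P : Type*) (g : P → V) :
    SimpleGraph (V ⊕ P) :=
  SimpleGraph.fromRel (fun a b =>
    match a, b with
    | .inl u, .inl v => H.Adj u v
    | .inl u, .inr p => g p = u
    | _, _ => False)

/-- if `G` is obtained from `H` by attaching `k` pendant vertices to every vertex,
then `H^k ⊠ K_k` is isomorphic to a subgraph of `G^(k+2)`. -/
theorem blowup_pow_embeds_in_pendant_pow {V : Type} (H : SimpleGraph V) (Δ k : ℕ)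
    (hdeg : MaxDegLE H Δ) :
    EmbedsIn (blowup (pow H k) k) (pow (attachPendants H (V × Fin k) Prod.fst) (k + 2)) := by
  classical
  set G := attachPendants H (V × Fin k) Prod.fst with hG
  have hadjHG : ∀ {u v : V}, H.Adj u v → G.Adj (Sum.inl u) (Sum.inl v) := by
    intro u v h
    refine ⟨by simp [h.ne], Or.inl h⟩
  have hpend : ∀ (v : V) (i : Fin k), G.Adj (Sum.inr (v, i)) (Sum.inl v) := by
    intro v i
    exact ⟨by simp, Or.inr rfl⟩
  let homInl : H →g G := ⟨Sum.inl, fun {u v} h => hadjHG h⟩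
  refine ⟨Sum.inr, fun a b hab => by simpa using hab, ?_⟩
  rintro ⟨v, i⟩ ⟨w, j⟩ (⟨hvw, hij⟩ | ⟨hne, hreach, hdist⟩)
  · subst hvw
    let pwalk : G.Walk (Sum.inr (v, i)) (Sum.inr (v, j)) :=
      SimpleGraph.Walk.cons (hpend v i) (SimpleGraph.Walk.cons (hpend v j).symm SimpleGraph.Walk.nil)
    refine ⟨by simp [hij], ⟨pwalk⟩, ?_⟩
    calc G.dist _ _ ≤ pwalk.length := SimpleGraph.dist_le pwalk
    _ ≤ k + 2 := by simp [pwalk]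
  · obtain ⟨p, hp⟩ := hreach.exists_walk_length_eq_dist
    let pwalk : G.Walk (Sum.inr (v, i)) (Sum.inr (w, j)) :=
      SimpleGraph.Walk.cons (hpend v i) ((p.map homInl).concat (hpend w j).symm)
    refine ⟨by simp [hne], ⟨pwalk⟩, ?_⟩
    calc G.dist _ _ ≤ pwalk.length := SimpleGraph.dist_le pwalk
    _ ≤ k + 2 := by
      simp only [pwalk, SimpleGraph.Walk.length_cons, SimpleGraph.Walk.length_concat,
        SimpleGraph.Walk.length_map]
      omega
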